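/- Let m, m' ∈ ℕ and let X be an m'-negligible metric space. Then ℝ^m × X, equipped with the product metric (the sup metric of the Euclidean metric on ℝ^m and the metric on X, which is bi-Lipschitz equivalent to every p-product metric for p ∈ [1,∞)), is (m+m')-negligible: its (m+m')-dimensional Hausdorff measure vanishes. -/

import Mathlib

/-!
Cover `X` by sets `tₙ` with `∑ (diam tₙ)^m'` small and enlarge their diameters to radii
`ρₙ > 0` keeping the sum small (positive scales are needed because some `tₙ` may be points).
By a volume-packing count, a ball of `ℝ^m` is covered by `O(ρ^(-m))` sets of diameter `≤ ρ`;
their products with `tₙ` cover `ball × X` with `∑ diam^(m + m') = O(∑ ρₙ^m')`, which is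
arbitrarily small. Finally `ℝ^m × X` is a countable union of such sets.
-/

open Set MeasureTheory

/-- A metric space is `s`-negligible iff its `s`-dimensional Hausdorff measure
(w.r.t. the Borel σ-algebra) vanishes. -/
def IsNegligibleSpace (X : Type*) [MetricSpace X] (s : ℝ) : Prop :=
  letI := borel X
  letI : BorelSpace X := ⟨rfl⟩
  μH[s] (Set.univ : Set X) = 0

open Filter Metric Module
open scoped ENNReal NNReal Topology

namespace MeasureTheory.Measure

variable {X : Type*} [EMetricSpace X] [MeasurableSpace X] [BorelSpace X] {d : ℝ} {s : Set X}

theorem exists_cover_tsum_ediam_rpow_lt (hd : 0 < d) (hs : μH[d] s = 0) {ε : ℝ≥0∞}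
    (hε : ε ≠ 0) : ∃ t : ℕ → Set X, s ⊆ ⋃ n, t n ∧ ∑' n, ediam (t n) ^ d < ε := by
  have h : (⨅ (t : ℕ → Set X) (_ : s ⊆ ⋃ n, t n) (_ : ∀ n, ediam (t n) ≤ 1),
      ∑' n, ⨆ _ : (t n).Nonempty, ediam (t n) ^ d) < ε := by
    refine lt_of_le_of_lt ?_ (hs ▸ pos_iff_ne_zero.2 hε)
    rw [hausdorffMeasure_apply]
    exact le_iSup₂_of_le 1 one_pos le_rfl
  simp only [iInf_lt_iff] at h
  obtain ⟨t, hst, -, ht⟩ := h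
  refine ⟨t, hst, lt_of_le_of_lt (ENNReal.tsum_le_tsum fun n => ?_) ht⟩
  rcases (t n).eq_empty_or_nonempty with hn | hn
  · simp [hn, ENNReal.zero_rpow_of_pos hd]
  · exact le_iSup_of_le hn le_rfl

theorem hausdorffMeasure_eq_zero_of_forall_cover (hd : 0 < d)
    (h : ∀ ε ≠ 0, ∃ 𝒰 : Set (Set X), 𝒰.Countable ∧ s ⊆ ⋃₀ 𝒰 ∧
      ∑' u : 𝒰, ediam (u : Set X) ^ d < ε) :
    μH[d] s = 0 := by
  choose 𝒰 h𝒰 hs𝒰 hsum using fun q : ℕ => h (q : ℝ≥0∞)⁻¹ (by simp)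
  have := fun q => (h𝒰 q).to_subtype
  -- `∑ diam^d < ε` forces every diameter below `ε^(1/d)`, so these covers get finer.
  have hdiam : ∀ q (u : 𝒰 q), ediam (u : Set X) ≤ ((q : ℝ≥0∞)⁻¹) ^ d⁻¹ := fun q u => by
    rw [← ENNReal.rpow_rpow_inv hd.ne' (ediam (u : Set X))]
    exact ENNReal.rpow_le_rpow ((ENNReal.le_tsum u).trans (hsum q).le) (inv_nonneg.2 hd.le)
  have hlim : Tendsto (fun q : ℕ => ((q : ℝ≥0∞)⁻¹) ^ d⁻¹) atTop (𝓝 0) := by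
    have := ((ENNReal.continuous_rpow_const (y := d⁻¹)).tendsto 0).comp
      ENNReal.tendsto_inv_nat_nhds_zero
    rwa [ENNReal.zero_rpow_of_pos (inv_pos.2 hd)] at this
  refine le_antisymm ?_ zero_le
  calc μH[d] s ≤ liminf (fun q => ∑' u : 𝒰 q, ediam (u : Set X) ^ d) atTop :=
        hausdorffMeasure_le_liminf_tsum d s _ hlim (fun q (u : 𝒰 q) => (u : Set X))
          (.of_forall hdiam) (.of_forall fun q => sUnion_eq_iUnion ▸ hs𝒰 q)
    _ ≤ liminf (fun q : ℕ => (q : ℝ≥0∞)⁻¹) atTop :=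
        liminf_le_liminf (.of_forall fun q => (hsum q).le)
    _ = 0 := ENNReal.tendsto_inv_nat_nhds_zero.liminf_eq

end MeasureTheory.Measure

theorem ENNReal.exists_pos_ge_tsum_rpow_lt {d : ℝ} (hd : 0 < d) {a : ℕ → ℝ≥0∞} {ε : ℝ≥0∞}
    (ha : ∑' n, a n ^ d < ε) :
    ∃ ρ : ℕ → ℝ≥0∞, (∀ n, 0 < ρ n) ∧ (∀ n, a n ≤ ρ n) ∧ ∑' n, ρ n ^ d < ε := by
  obtain ⟨δ, hδ, hδε⟩ := ENNReal.exists_pos_sum_of_countable' (tsub_pos_of_lt ha).ne' ℕ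
  refine ⟨fun n => (a n ^ d + δ n) ^ d⁻¹, fun n => ?_, fun n => ?_, ?_⟩
  · exact ENNReal.rpow_pos_of_nonneg ((hδ n).trans_le le_add_self) (inv_nonneg.2 hd.le)
  · conv_lhs => rw [← ENNReal.rpow_rpow_inv hd.ne' (a n)]
    exact ENNReal.rpow_le_rpow le_self_add (inv_nonneg.2 hd.le)
  · simp only [ENNReal.rpow_inv_rpow hd.ne', ENNReal.tsum_add]
    exact lt_tsub_iff_left.1 hδε

/-- `S` has upper box-counting dimension at most `k`, with constant `C`. -/
def HasBoxCountingBound {Y : Type*} [PseudoEMetricSpace Y] (S : Set Y) (k : ℝ) (C : ℝ≥0∞) :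
    Prop :=
  ∀ r : ℝ≥0∞, 0 < r → r ≤ 1 → ∃ U : Finset (Set Y),
    S ⊆ ⋃₀ ↑U ∧ (∀ u ∈ U, ediam u ≤ r) ∧ (U.card : ℝ≥0∞) * r ^ k ≤ C

theorem Metric.ediam_prod_le {α β : Type*} [PseudoEMetricSpace α] [PseudoEMetricSpace β]
    (s : Set α) (t : Set β) : ediam (s ×ˢ t) ≤ max (ediam s) (ediam t) :=
  ediam_le fun _ hp _ hq =>
    max_le_max (edist_le_ediam_of_mem hp.1 hq.1) (edist_le_ediam_of_mem hp.2 hq.2)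

section Product

variable {Y X : Type*} [EMetricSpace Y] [EMetricSpace X] {S : Set Y} {T : Set X} {k s : ℝ}
  {C : ℝ≥0∞}

theorem tsum_ediam_prod_rpow_le (hks : 0 ≤ k + s) (U : Finset (Set Y)) {t : Set X}
    {r : ℝ≥0∞} (hr0 : r ≠ 0) (hr : r ≠ ⊤) (hU : ∀ u ∈ U, ediam u ≤ r) (ht : ediam t ≤ r) :
    ∑' u : U, ediam ((u : Set Y) ×ˢ t) ^ (k + s) ≤ U.card * r ^ k * r ^ s := by
  calc ∑' u : U, ediam ((u : Set Y) ×ˢ t) ^ (k + s) ≤ ∑' _ : U, r ^ (k + s) :=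
        ENNReal.tsum_le_tsum fun u => ENNReal.rpow_le_rpow
          ((ediam_prod_le _ _).trans (max_le (hU u u.2) ht)) hks
    _ = U.card * r ^ k * r ^ s := by
        rw [tsum_fintype, Finset.sum_const, Finset.card_univ, Fintype.card_coe, nsmul_eq_mul,
          ENNReal.rpow_add _ _ hr0 hr, mul_assoc]

theorem HasBoxCountingBound.exists_prod_cover [MeasurableSpace X] [BorelSpace X]
    (hS : HasBoxCountingBound S k C) (hks : 0 ≤ k + s) (hs : 0 < s) (hT : μH[s] T = 0)
    {ε : ℝ≥0∞} (hε0 : ε ≠ 0) (hε1 : ε ≤ 1) :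
    ∃ 𝒰 : Set (Set (Y × X)), 𝒰.Countable ∧ S ×ˢ T ⊆ ⋃₀ 𝒰 ∧
      ∑' u : 𝒰, ediam (u : Set (Y × X)) ^ (k + s) ≤ C * ε := by
  obtain ⟨t, hTt, htε⟩ := Measure.exists_cover_tsum_ediam_rpow_lt hs hT hε0
  obtain ⟨ρ, hρ0, htρ, hρε⟩ := ENNReal.exists_pos_ge_tsum_rpow_lt hs htε
  have hρ1 : ∀ n, ρ n ≤ 1 := fun n => by
    rw [← ENNReal.rpow_rpow_inv hs.ne' (ρ n), ← ENNReal.one_rpow s⁻¹]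
    exact ENNReal.rpow_le_rpow ((ENNReal.le_tsum n).trans (hρε.le.trans hε1)) (inv_nonneg.2 hs.le)
  choose U hSU hUdiam hUcard using fun n => hS (ρ n) (hρ0 n) (hρ1 n)
  let box : (Σ n, U n) → Set (Y × X) := fun p => (p.2 : Set Y) ×ˢ t p.1
  refine ⟨range box, countable_range box, ?_, ?_⟩
  · rintro ⟨y, x⟩ ⟨hy, hx⟩
    obtain ⟨n, hxn⟩ := mem_iUnion.1 (hTt hx)
    obtain ⟨u, hu, hyu⟩ := mem_sUnion.1 (hSU n hy)
    exact mem_sUnion.2 ⟨box ⟨n, u, hu⟩, mem_range_self _, hyu, hxn⟩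
  · calc ∑' u : range box, ediam (u : Set (Y × X)) ^ (k + s)
        ≤ ∑' p, ediam (box p) ^ (k + s) :=
          ENNReal.tsum_le_tsum_comp_of_surjective rangeFactorization_surjective _
      _ = ∑' n, ∑' u : U n, ediam ((u : Set Y) ×ˢ t n) ^ (k + s) := ENNReal.tsum_sigma' _
      _ ≤ ∑' n, C * ρ n ^ s := ENNReal.tsum_le_tsum fun n =>
          (tsum_ediam_prod_rpow_le hks (U n) (hρ0 n).ne'
            (ne_top_of_le_ne_top ENNReal.one_ne_top (hρ1 n)) (hUdiam n) (htρ n)).trans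
            (mul_le_mul_left (hUcard n) _)
      _ = C * ∑' n, ρ n ^ s := ENNReal.tsum_mul_left
      _ ≤ C * ε := mul_le_mul_right hρε.le C

theorem HasBoxCountingBound.hausdorffMeasure_prod_eq_zero [MeasurableSpace X] [BorelSpace X]
    [MeasurableSpace (Y × X)] [BorelSpace (Y × X)] (hS : HasBoxCountingBound S k C) (hC : C ≠ ⊤)
    (hk : 0 ≤ k) (hs : 0 ≤ s) (hT : μH[s] T = 0) : μH[k + s] (S ×ˢ T) = 0 := by
  rcases hs.eq_or_lt with rfl | hs
  · have : T = ∅ := not_nonempty_iff_eq_empty.1 fun hT' => by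
      simpa [hT] using Measure.one_le_hausdorffMeasure_zero_of_nonempty hT'
    simp [this]
  refine Measure.hausdorffMeasure_eq_zero_of_forall_cover (add_pos_of_nonneg_of_pos hk hs)
    fun ε hε => ?_
  obtain ⟨δ, hδ0, hδ⟩ := ENNReal.exists_nnreal_pos_mul_lt hC hε
  obtain ⟨𝒰, h𝒰, hcov, hsum⟩ := hS.exists_prod_cover (add_nonneg hk hs.le) hs hT (ε := min δ 1)
    (by simp [hδ0.ne']) (min_le_right _ _)
  exact ⟨𝒰, h𝒰, hcov, hsum.trans_lt ((mul_le_mul_right (min_le_left _ _) C).trans_lt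
    (mul_comm C δ ▸ hδ))⟩

end Product

section FiniteDimensional

variable {E : Type*} [NormedAddCommGroup E] [NormedSpace ℝ E] [FiniteDimensional ℝ E]

theorem Finset.card_mul_pow_le_of_isSeparated {F : Finset E} {ρ R : ℝ} (hρ : 0 < ρ)
    (hR : 0 ≤ R) (hF : IsSeparated (ENNReal.ofReal (2 * ρ)) (F : Set E))
    (hFR : (F : Set E) ⊆ closedBall 0 R) :
    (F.card : ℝ) * ρ ^ finrank ℝ E ≤ (R + ρ) ^ finrank ℝ E := by
  borelize E
  set μ : Measure E := Measure.addHaar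
  have hdisj : (F : Set E).PairwiseDisjoint (ball · ρ) := fun x hx y hy hxy =>
    ball_disjoint_ball <| by
      have : ENNReal.ofReal (2 * ρ) < edist x y := hF hx hy hxy
      rw [edist_dist, ENNReal.ofReal_lt_ofReal_iff_of_nonneg (by positivity)] at this
      linarith
  have hsub : ⋃ x ∈ F, ball x ρ ⊆ ball 0 (R + ρ) := iUnion₂_subset fun x hx =>
    ball_subset_ball' <| by linarith [mem_closedBall.1 (hFR hx)]
  have hB0 : μ (ball 0 1) ≠ 0 := isOpen_ball.measure_ne_zero μ (nonempty_ball.2 one_pos)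
  have hBtop : μ (ball 0 1) ≠ ⊤ := measure_ball_lt_top.ne
  have hvol : (F.card : ℝ≥0∞) * ENNReal.ofReal (ρ ^ finrank ℝ E) * μ (ball 0 1) ≤
      ENNReal.ofReal ((R + ρ) ^ finrank ℝ E) * μ (ball 0 1) :=
    calc (F.card : ℝ≥0∞) * ENNReal.ofReal (ρ ^ finrank ℝ E) * μ (ball 0 1)
        = ∑ x ∈ F, μ (ball x ρ) := by
          simp [Measure.addHaar_ball_of_pos μ _ hρ, mul_assoc]
      _ = μ (⋃ x ∈ F, ball x ρ) :=
          (measure_biUnion_finset hdisj fun _ _ => measurableSet_ball).symm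
      _ ≤ μ (ball 0 (R + ρ)) := measure_mono hsub
      _ = _ := Measure.addHaar_ball_of_pos μ _ (by positivity)
  rwa [ENNReal.mul_le_mul_iff_left hB0 hBtop, ← ENNReal.ofReal_natCast,
    ← ENNReal.ofReal_mul (by positivity), ENNReal.ofReal_le_ofReal_iff (by positivity)] at hvol

theorem IsSeparated.encard_le_of_subset_closedBall {C : Set E} {ρ R : ℝ} (hρ : 0 < ρ)
    (hR : 0 ≤ R) (hC : IsSeparated (ENNReal.ofReal (2 * ρ)) C) (hCR : C ⊆ closedBall 0 R) :
    C.encard ≤ ⌊((R + ρ) / ρ) ^ finrank ℝ E⌋₊ := by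
  by_contra! h
  obtain ⟨t, htC, htcard⟩ := exists_subset_encard_eq (Order.add_one_le_of_lt h)
  have ht : t.Finite := finite_of_encard_eq_coe htcard
  have hcard := Finset.card_mul_pow_le_of_isSeparated (F := ht.toFinset) hρ hR
    (by simpa using hC.subset htC) (by simpa using htC.trans hCR)
  have hF : ht.toFinset.card = ⌊((R + ρ) / ρ) ^ finrank ℝ E⌋₊ + 1 := by
    rw [← ht.coe_toFinset, encard_coe_eq_coe_finsetCard] at htcard
    exact_mod_cast htcard
  rw [hF, ← le_div_iff₀ (by positivity), ← div_pow] at hcard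
  exact (Nat.lt_floor_add_one _).not_ge (by exact_mod_cast hcard)

theorem hasBoxCountingBound_closedBall {R : ℝ} (hR : 0 ≤ R) :
    HasBoxCountingBound (closedBall (0 : E) R) (finrank ℝ E)
      (ENNReal.ofReal ((4 * R + 1) ^ finrank ℝ E)) := by
  intro r hr0 hr1
  lift r to ℝ≥0 using ne_top_of_le_ne_top ENNReal.one_ne_top hr1
  set ρ : ℝ := r / 4
  have hρ : 0 < ρ := by have : 0 < r := ENNReal.coe_pos.1 hr0; positivity
  set ε : ℝ≥0 := (2 * ρ).toNNReal
  set M := maximalSeparatedSet ε (closedBall (0 : E) R)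
  have hpack : packingNumber ε (closedBall (0 : E) R) ≠ ⊤ :=
    ne_top_of_le_ne_top (ENat.natCast_ne_top ⌊((R + ρ) / ρ) ^ finrank ℝ E⌋₊) <|
      iSup₂_le fun C hCR => iSup_le fun hC =>
        IsSeparated.encard_le_of_subset_closedBall hρ hR hC hCR
  have hM : M.Finite := encard_ne_top_iff.1 (encard_maximalSeparatedSet hpack ▸ hpack)
  have h4ρ : 4 * ρ = r := mul_div_cancel₀ _ four_ne_zero
  have hr1' : (r : ℝ) ≤ 1 := by exact_mod_cast hr1
  have hε : 2 * (ε : ℝ≥0∞) = r := by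
    change 2 * ENNReal.ofReal (2 * ρ) = r
    rw [← ENNReal.ofReal_ofNat 2, ← ENNReal.ofReal_mul zero_le_two, ← mul_assoc,
      show (2 : ℝ) * 2 = 4 by norm_num, h4ρ, ENNReal.ofReal_coe_nnreal]
  -- A maximal `r/2`-separated set is an `r/2`-net, so balls of diameter `≤ r` around it cover.
  have hcard := Finset.card_mul_pow_le_of_isSeparated (F := hM.toFinset) hρ hR
    (by rw [hM.coe_toFinset]; exact isSeparated_maximalSeparatedSet)
    (by rw [hM.coe_toFinset]; exact maximalSeparatedSet_subset)
  refine ⟨hM.toFinset.image (closedEBall · ε), fun x hx => ?_, fun u hu => ?_, ?_⟩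
  · obtain ⟨y, hyM, hxy⟩ := isCover_maximalSeparatedSet hpack hx
    exact mem_sUnion.2 ⟨closedEBall y ε, by simpa using ⟨y, hyM, rfl⟩, hxy⟩
  · obtain ⟨y, -, rfl⟩ := Finset.mem_image.1 hu
    exact hε ▸ ediam_closedEBall_le
  · calc ((hM.toFinset.image (closedEBall · ε)).card : ℝ≥0∞) * (r : ℝ≥0∞) ^ (finrank ℝ E : ℝ)
        ≤ hM.toFinset.card * (r : ℝ≥0∞) ^ (finrank ℝ E : ℝ) := by
          gcongr
          exact_mod_cast Finset.card_image_le
      _ = ENNReal.ofReal (hM.toFinset.card * (4 * ρ) ^ finrank ℝ E) := by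
          rw [ENNReal.rpow_natCast, ENNReal.ofReal_mul (by positivity), ENNReal.ofReal_natCast,
            ENNReal.ofReal_pow (by positivity), h4ρ, ENNReal.ofReal_coe_nnreal]
      _ ≤ ENNReal.ofReal ((4 * R + 1) ^ finrank ℝ E) := by
          refine ENNReal.ofReal_le_ofReal ?_
          calc (hM.toFinset.card : ℝ) * (4 * ρ) ^ finrank ℝ E
              = 4 ^ finrank ℝ E * (hM.toFinset.card * ρ ^ finrank ℝ E) := by rw [mul_pow]; ring
            _ ≤ 4 ^ finrank ℝ E * (R + ρ) ^ finrank ℝ E := by gcongr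
            _ = (4 * R + r) ^ finrank ℝ E := by rw [← mul_pow, ← h4ρ, mul_add]
            _ ≤ (4 * R + 1) ^ finrank ℝ E := by gcongr

end FiniteDimensional

/-- **Negligibility and product with `ℝ^m`.** If `X` is an `m'`-negligible metric space,
then `ℝ^m × X` (with the sup product metric of the Euclidean metric on `ℝ^m` and the
metric of `X`) is `(m + m')`-negligible. -/
theorem product_with_Rm_negligible (m m' : ℕ) (X : Type*) [MetricSpace X]
    (hX : IsNegligibleSpace X m') :
    IsNegligibleSpace (EuclideanSpace ℝ (Fin m) × X) (m + m') := by
  let := borel X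
  have : BorelSpace X := ⟨rfl⟩
  let := borel (EuclideanSpace ℝ (Fin m) × X)
  have : BorelSpace (EuclideanSpace ℝ (Fin m) × X) := ⟨rfl⟩
  have hX' : μH[(m' : ℝ)] (univ : Set X) = 0 := hX
  have hball (R : ℕ) :
      μH[m + m'] (closedBall (0 : EuclideanSpace ℝ (Fin m)) R ×ˢ (univ : Set X)) = 0 := by
    have := (hasBoxCountingBound_closedBall (E := EuclideanSpace ℝ (Fin m))
      R.cast_nonneg).hausdorffMeasure_prod_eq_zero
      ENNReal.ofReal_ne_top (Nat.cast_nonneg _) (Nat.cast_nonneg m') hX'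
    rwa [finrank_euclideanSpace_fin] at this
  show μH[m + m'] univ = 0
  rw [← univ_prod_univ, ← iUnion_closedBall_nat 0, iUnion_prod_const]
  exact measure_iUnion_null hball
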